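/- arXiv:1311.2018 — 4 statements merged into one kernel-verified Lean document; each statement's English description precedes it below -/
import Mathlib

section
/- Let f ∈ k[X] be a polynomial of degree 2g+2 whose leading coefficient is not a square in k^×, where char(k) ≠ 2. Then for all a, b ∈ k(X), deg(a² - f·b²) = 2·max(deg(a), g + 1 + deg(b)), where deg is the degree function on k(X) extended from polynomials. -/
/-!
Clearing denominators turns `a² - f b²` into `p² - f q²` with `p, q ∈ k[X]`. If `p²` and `f q²`
have different degrees, the difference has the larger one. If the degrees agree, the top
coefficient of the difference is `α² - c β²` with `c` the leading coefficient of `f`, which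
vanishes only for `α = β = 0` because `c` is not a square. So in every case
`deg (a² - f b²) = max (2 deg a, deg f + 2 deg b)`.
-/

open scoped Classical

/-- The degree of a rational function, with `deg 0 = -∞`. -/
noncomputable def degB {k : Type} [Field k] (x : RatFunc k) : WithBot ℤ :=
  if x = 0 then ⊥ else (x.intDegree : WithBot ℤ)

open Polynomial

theorem sq_sub_mul_sq_eq_zero_iff {K : Type*} [Field K] {c : K} (hc : ¬IsSquare c) {x y : K} :
    x ^ 2 - c * y ^ 2 = 0 ↔ x = 0 ∧ y = 0 := by
  refine ⟨fun h => ?_, fun ⟨hx, hy⟩ => by simp [hx, hy]⟩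
  by_cases hy : y = 0
  · simpa [hy] using h
  · exact (hc ⟨x / y, by field_simp; linear_combination -h⟩).elim

theorem Polynomial.degree_sq_sub_mul_sq {K : Type*} [Field K] {f : K[X]}
    (hf : ¬IsSquare f.leadingCoeff) (p q : K[X]) :
    (p ^ 2 - f * q ^ 2).degree = max (p ^ 2).degree (f * q ^ 2).degree := by
  rcases eq_or_ne (p.leadingCoeff ^ 2 - f.leadingCoeff * q.leadingCoeff ^ 2) 0 with h | h
  · obtain ⟨hp, hq⟩ := (sq_sub_mul_sq_eq_zero_iff hf).1 h
    simp [leadingCoeff_eq_zero.1 hp, leadingCoeff_eq_zero.1 hq]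
  · rw [sub_eq_add_neg, degree_add_eq_of_leadingCoeff_add_ne_zero, degree_neg]
    simpa [leadingCoeff_mul, leadingCoeff_pow, ← sub_eq_add_neg] using h

theorem WithBot.max_add_self_eq_two_mul_max (x y : WithBot ℤ) (c : ℤ) :
    max (x + x) (((2 * c : ℤ) : WithBot ℤ) + (y + y)) = ((2 : ℤ) : WithBot ℤ) * max x (c + y) := by
  induction x <;> induction y <;> norm_cast
  · simp only [WithBot.bot_add, max_bot_left]; norm_cast; ring
  · simp only [WithBot.add_bot, max_bot_right]; norm_cast; ring
  · omega

section degB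

variable {k : Type} [Field k]

theorem degB_zero : degB (0 : RatFunc k) = ⊥ := if_pos rfl

theorem degB_mul (x y : RatFunc k) : degB (x * y) = degB x + degB y := by
  rcases eq_or_ne x 0 with rfl | hx
  · simp [degB_zero]
  rcases eq_or_ne y 0 with rfl | hy
  · simp [degB_zero]
  simp [degB, hx, hy, RatFunc.intDegree_mul hx hy]

theorem degB_sq (x : RatFunc k) : degB (x ^ 2) = degB x + degB x := by
  rw [sq, degB_mul]

theorem degB_algebraMap (p : k[X]) :
    degB (algebraMap k[X] (RatFunc k) p) = p.degree.map (Nat.cast : ℕ → ℤ) := by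
  rcases eq_or_ne p 0 with rfl | hp
  · simp [degB_zero]
  simp [degB, hp, degree_eq_natDegree hp, RatFunc.intDegree_polynomial]

theorem degB_algebraMap_sub_of_degree_eq_max {p q : k[X]}
    (h : (p - q).degree = max p.degree q.degree) :
    degB (algebraMap k[X] (RatFunc k) (p - q)) =
      max (degB (algebraMap k[X] (RatFunc k) p)) (degB (algebraMap k[X] (RatFunc k) q)) := by
  simp only [degB_algebraMap, h]
  exact (WithBot.monotone_map_iff.2 Nat.mono_cast).map_max

theorem degB_sq_sub_mul_sq {f : k[X]} (hf : ¬IsSquare f.leadingCoeff) (a b : RatFunc k) :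
    degB (a ^ 2 - algebraMap k[X] (RatFunc k) f * b ^ 2) =
      max (degB (a ^ 2)) (degB (algebraMap k[X] (RatFunc k) f * b ^ 2)) := by
  obtain ⟨p, q, d, hp, hq⟩ := IsLocalization.surj₂ (nonZeroDivisors k[X]) (RatFunc k) a b
  set D := algebraMap k[X] (RatFunc k) d
  have hD : degB (D ^ 2) ≠ ⊥ := by
    simp [degB, D, nonZeroDivisors.coe_ne_zero d]
  have hcleared : (a ^ 2 - algebraMap k[X] (RatFunc k) f * b ^ 2) * D ^ 2 =
      algebraMap k[X] (RatFunc k) (p ^ 2 - f * q ^ 2) := by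
    simp only [map_sub, map_mul, map_pow, ← hp, ← hq]
    ring
  refine WithBot.add_right_cancel hD ?_
  rw [← degB_mul, hcleared, degB_algebraMap_sub_of_degree_eq_max (degree_sq_sub_mul_sq hf p q),
    ← max_add_add_right, ← degB_mul, ← degB_mul]
  simp only [map_mul, map_pow, ← hp, ← hq]
  ring_nf

end degB

theorem stmt3_general (k : Type) [Field k] (g : ℕ)
    (f : Polynomial k) (hf : f.natDegree = 2 * g + 2)
    (hlead : ¬ ∃ c : k, c ^ 2 = f.leadingCoeff) :
    ∀ a b : RatFunc k,
      degB (a ^ 2 - (algebraMap (Polynomial k) (RatFunc k) f) * b ^ 2)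
        = ((2 : ℤ) : WithBot ℤ) * max (degB a) ((((g : ℤ) + 1 : ℤ) : WithBot ℤ) + degB b) := by
  intro a b
  have hsq : ¬IsSquare f.leadingCoeff := fun ⟨c, hc⟩ => hlead ⟨c, by rw [hc, sq]⟩
  have hdeg : degB (algebraMap k[X] (RatFunc k) f) = ((2 * ((g : ℤ) + 1) : ℤ) : WithBot ℤ) := by
    rw [degB_algebraMap, (degree_eq_iff_natDegree_eq_of_pos (by omega)).2 hf]
    norm_cast
  rw [degB_sq_sub_mul_sq hsq, degB_mul, hdeg, degB_sq, degB_sq, WithBot.max_add_self_eq_two_mul_max]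

/-- If `f ∈ k[X]` has degree `2g+2` and its leading coefficient is not a square
(char k ≠ 2), then `deg (a² - f b²) = 2 · max (deg a, g + 1 + deg b)` for all
rational functions `a, b`. -/
theorem stmt3 (k : Type) [Field k] (hchar : ringChar k ≠ 2) (g : ℕ) (hg : 1 ≤ g)
    (f : Polynomial k) (hf : f.natDegree = 2 * g + 2)
    (hlead : ¬ ∃ c : k, c ^ 2 = f.leadingCoeff) :
    ∀ a b : RatFunc k,
      degB (a ^ 2 - (algebraMap (Polynomial k) (RatFunc k) f) * b ^ 2)
        = ((2 : ℤ) : WithBot ℤ) * max (degB a) ((((g : ℤ) + 1 : ℤ) : WithBot ℤ) + degB b) :=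
  stmt3_general k g f hf hlead
end

section
/- Let char(k) ≠ 2 and f ∈ k[X] of degree 2g+2 with non-square leading coefficient, g ≥ 1. Define K = k(X)[Y]/(Y² - f), a quadratic extension of Q = k(X), and let O = k[X][Y]/(Y² - f) ⊂ K. Then for every x ∈ K there exists y ∈ O with deg(N_{K/Q}(x - y)) ≤ 2g, where N_{K/Q}(a + bY) = a² - f b² and deg is the extended polynomial degree on k(X). -/
/-!
Write `x = a + bY` and subtract from `a` and `b` their polynomial parts. What remains is
`r + sY` with `deg r, deg s < 0`, so its norm `r² - f s²` has degree at most
`max (-2) (2g + 2 - 2) = 2g`.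
-/

open Polynomial

namespace RatFunc

variable {k : Type*} [Field k]

theorem sub_algebraMap_divByMonic_eq (q : RatFunc k) :
    q - algebraMap k[X] (RatFunc k) (q.num /ₘ q.denom)
      = algebraMap k[X] (RatFunc k) (q.num %ₘ q.denom) / algebraMap k[X] (RatFunc k) q.denom := by
  have hden : algebraMap k[X] (RatFunc k) q.denom ≠ 0 := by simpa using q.denom_ne_zero
  have hq : q * algebraMap k[X] (RatFunc k) q.denom = algebraMap k[X] (RatFunc k) q.num :=
    (eq_div_iff hden).mp q.num_div_denom.symm
  have hnum := congrArg (algebraMap k[X] (RatFunc k)) (modByMonic_add_div q.num q.denom)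
  rw [map_add, map_mul] at hnum
  rw [eq_div_iff hden, sub_mul, hq]
  linear_combination -hnum

theorem exists_sub_algebraMap_eq_zero_or_intDegree_neg (q : RatFunc k) :
    ∃ c : k[X], q - algebraMap k[X] (RatFunc k) c = 0 ∨
      (q - algebraMap k[X] (RatFunc k) c).intDegree < 0 := by
  refine ⟨q.num /ₘ q.denom, ?_⟩
  rw [sub_algebraMap_divByMonic_eq]
  by_cases hrem : q.num %ₘ q.denom = 0
  · left
    simp [hrem]
  · right
    have hden : q.denom ≠ 1 := by
      rintro h
      exact hrem (by rw [h, modByMonic_one])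
    rw [intDegree_div (by simpa using hrem) (by simpa using q.denom_ne_zero),
      intDegree_polynomial, intDegree_polynomial, sub_neg, Nat.cast_lt]
    exact natDegree_modByMonic_lt _ q.monic_denom hden

/-- The hypothesis `0 ≤ n` covers the cases where `y` or `x + y` is `0`, whose `intDegree` is `0`. -/
theorem intDegree_add_le_of_le {x y : RatFunc k} {n : ℤ} (hn : 0 ≤ n)
    (hx : x.intDegree ≤ n) (hy : y.intDegree ≤ n) : (x + y).intDegree ≤ n := by
  by_cases hy0 : y = 0
  · simpa [hy0] using hx
  by_cases hxy : x + y = 0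
  · simpa [hxy] using hn
  exact (intDegree_add_le hy0 hxy).trans (max_le hx hy)

theorem intDegree_mul_sq_le {F s : RatFunc k} {n : ℤ} (hn : 0 ≤ n)
    (hF : F.intDegree ≤ n + 2) (hs : s = 0 ∨ s.intDegree < 0) :
    (F * s ^ 2).intDegree ≤ n := by
  by_cases hF0 : F = 0
  · simpa [hF0] using hn
  rcases hs with hs | hs
  · simpa [hs] using hn
  have hs0 : s ≠ 0 := by
    rintro rfl
    simp at hs
  rw [intDegree_mul hF0 (pow_ne_zero 2 hs0), sq, intDegree_mul hs0 hs0]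
  omega

end RatFunc

theorem stmt4_general (k : Type) [Field k] (g : ℕ)
    (f : Polynomial k) (hf : f.natDegree = 2 * g + 2)
    (K : Type) [Field K] [Algebra (RatFunc k) K]
    (Y : K)
    (hrep : ∀ z : K, ∃! ab : RatFunc k × RatFunc k,
        z = algebraMap (RatFunc k) K ab.1 + algebraMap (RatFunc k) K ab.2 * Y)
    (hnorm : ∀ a b : RatFunc k,
        Algebra.norm (RatFunc k)
            (algebraMap (RatFunc k) K a + algebraMap (RatFunc k) K b * Y)
          = a ^ 2 - (algebraMap (Polynomial k) (RatFunc k) f) * b ^ 2) :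
    ∀ x : K, ∃ c d : Polynomial k,
      x = algebraMap (RatFunc k) K (algebraMap (Polynomial k) (RatFunc k) c)
            + algebraMap (RatFunc k) K (algebraMap (Polynomial k) (RatFunc k) d) * Y ∨
      (Algebra.norm (RatFunc k)
          (x - (algebraMap (RatFunc k) K (algebraMap (Polynomial k) (RatFunc k) c)
            + algebraMap (RatFunc k) K (algebraMap (Polynomial k) (RatFunc k) d) * Y))).intDegree
        ≤ 2 * (g : ℤ) := by
  intro x
  obtain ⟨⟨a, b⟩, rfl, -⟩ := hrep x
  obtain ⟨c, hc⟩ := RatFunc.exists_sub_algebraMap_eq_zero_or_intDegree_neg a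
  obtain ⟨d, hd⟩ := RatFunc.exists_sub_algebraMap_eq_zero_or_intDegree_neg b
  refine ⟨c, d, Or.inr ?_⟩
  set r := a - algebraMap k[X] (RatFunc k) c
  set s := b - algebraMap k[X] (RatFunc k) d
  have hdiff : algebraMap (RatFunc k) K a + algebraMap (RatFunc k) K b * Y
      - (algebraMap (RatFunc k) K (algebraMap k[X] (RatFunc k) c)
        + algebraMap (RatFunc k) K (algebraMap k[X] (RatFunc k) d) * Y)
      = algebraMap (RatFunc k) K r + algebraMap (RatFunc k) K s * Y := by
    simp only [r, s, map_sub]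
    ring
  have hnorm_eq : r ^ 2 - algebraMap k[X] (RatFunc k) f * s ^ 2
      = 1 * r ^ 2 + -algebraMap k[X] (RatFunc k) f * s ^ 2 := by ring
  rw [hdiff, hnorm, hnorm_eq]
  have hg : (0 : ℤ) ≤ 2 * g := by positivity
  refine RatFunc.intDegree_add_le_of_le hg (RatFunc.intDegree_mul_sq_le hg ?_ hc)
    (RatFunc.intDegree_mul_sq_le hg ?_ hd)
  · simp only [RatFunc.intDegree_one]
    omega
  · rw [RatFunc.intDegree_neg, RatFunc.intDegree_polynomial, hf]
    push_cast
    omega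

/-- In the quadratic extension `K = k(X)(√f)` with `f` of degree `2g+2` and non-square
leading coefficient, every element of `K` is at norm-degree distance at most `2g`
from the ring `O = k[X][√f]`. -/
theorem stmt4 (k : Type) [Field k] (hchar : ringChar k ≠ 2) (g : ℕ) (hg : 1 ≤ g)
    (f : Polynomial k) (hf : f.natDegree = 2 * g + 2)
    (hlead : ¬ ∃ c : k, c ^ 2 = f.leadingCoeff)
    (K : Type) [Field K] [Algebra (RatFunc k) K]
    (Y : K)
    (hY : Y ^ 2 = algebraMap (RatFunc k) K (algebraMap (Polynomial k) (RatFunc k) f))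
    (hrep : ∀ z : K, ∃! ab : RatFunc k × RatFunc k,
        z = algebraMap (RatFunc k) K ab.1 + algebraMap (RatFunc k) K ab.2 * Y)
    (hnorm : ∀ a b : RatFunc k,
        Algebra.norm (RatFunc k)
            (algebraMap (RatFunc k) K a + algebraMap (RatFunc k) K b * Y)
          = a ^ 2 - (algebraMap (Polynomial k) (RatFunc k) f) * b ^ 2) :
    ∀ x : K, ∃ c d : Polynomial k,
      x = algebraMap (RatFunc k) K (algebraMap (Polynomial k) (RatFunc k) c)
            + algebraMap (RatFunc k) K (algebraMap (Polynomial k) (RatFunc k) d) * Y ∨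
      (Algebra.norm (RatFunc k)
          (x - (algebraMap (RatFunc k) K (algebraMap (Polynomial k) (RatFunc k) c)
            + algebraMap (RatFunc k) K (algebraMap (Polynomial k) (RatFunc k) d) * Y))).intDegree
        ≤ 2 * (g : ℤ) :=
  stmt4_general k g f hf K Y hrep hnorm
end

section
/- Let char(k) ≠ 2 and f ∈ k[X] of degree 2g+2 with non-square leading coefficient, g ≥ 1, K = k(X)(√f) with Y² = f. Then the element x = Y/X ∈ K satisfies: for every y = c + dY with c, d ∈ k[X], deg(N_{K/k(X)}(x - y)) ≥ 2g. Consequently the Euclidean minimum M(K) = max_x min_y deg(N(x-y)) equals 2g. -/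
/-!
Write elements of `K` as `a + bY` and let `v` be the valuation of `k(X)` at infinity,
`v z = exp (deg z)`. Since the leading coefficient of `f` is not a square, the top terms of
`a²` and `f b²` can never cancel, so `v (a² - f b²) ≥ v f · v b²`. For `x = Y/X` and any
`c + dY`, the `Y`-coefficient of the difference is `1/X - d`, of valuation at least `exp (-1)`,
whence `deg N ≥ (2g + 2) - 2`. Conversely, subtracting the polynomial parts of `a` and `b`
leaves coefficients of valuation at most `exp (-1)`, and the ultrametric inequality gives
`deg N ≤ max (-2, 2g + 2 - 2) = 2g`.
-/

open Polynomial WithZero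

section

variable {k : Type*} [Field k]

theorem sq_ne_mul_sq_of_not_isSquare {u : k} (hu : ¬ IsSquare u) {v : k} (hv : v ≠ 0) (w : k) :
    w ^ 2 ≠ u * v ^ 2 := fun h =>
  hu ⟨w / v, by field_simp; linear_combination -h⟩

namespace Polynomial

theorem ne_zero_of_not_isSquare_leadingCoeff {f : k[X]} (hf : ¬ IsSquare f.leadingCoeff) :
    f ≠ 0 := by
  rintro rfl
  exact hf ⟨0, by simp⟩

theorem leadingCoeff_sq_ne_leadingCoeff_mul_sq {f : k[X]} (hf : ¬ IsSquare f.leadingCoeff)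
    {B : k[X]} (hB : B ≠ 0) (A : k[X]) :
    A.leadingCoeff ^ 2 ≠ f.leadingCoeff * B.leadingCoeff ^ 2 :=
  sq_ne_mul_sq_of_not_isSquare hf (leadingCoeff_ne_zero.mpr hB) _

theorem sq_sub_mul_sq_ne_zero {f : k[X]} (hf : ¬ IsSquare f.leadingCoeff)
    {B : k[X]} (hB : B ≠ 0) (A : k[X]) : A ^ 2 - f * B ^ 2 ≠ 0 := fun h => by
  have hlc := congrArg leadingCoeff (sub_eq_zero.mp h)
  rw [leadingCoeff_pow, leadingCoeff_mul, leadingCoeff_pow] at hlc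
  exact leadingCoeff_sq_ne_leadingCoeff_mul_sq hf hB A hlc

theorem natDegree_add_two_mul_le_natDegree_sq_sub_mul_sq {f : k[X]}
    (hf : ¬ IsSquare f.leadingCoeff) {B : k[X]} (hB : B ≠ 0) (A : k[X]) :
    f.natDegree + 2 * B.natDegree ≤ (A ^ 2 - f * B ^ 2).natDegree := by
  have hf0 := ne_zero_of_not_isSquare_leadingCoeff hf
  have hfB : (f * B ^ 2).natDegree = f.natDegree + 2 * B.natDegree := by
    rw [natDegree_mul hf0 (pow_ne_zero 2 hB), natDegree_pow]
  rcases lt_trichotomy (A ^ 2).natDegree (f * B ^ 2).natDegree with h | h | h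
  · rw [natDegree_sub_eq_right_of_natDegree_lt h, hfB]
  · have htop : (A ^ 2 - f * B ^ 2).coeff (f * B ^ 2).natDegree
        = A.leadingCoeff ^ 2 - f.leadingCoeff * B.leadingCoeff ^ 2 := by
      rw [coeff_sub, ← h, coeff_natDegree, h, coeff_natDegree, leadingCoeff_pow,
        leadingCoeff_mul, leadingCoeff_pow]
    rw [← hfB]
    refine le_natDegree_of_ne_zero ?_
    rw [htop]
    exact sub_ne_zero.mpr (leadingCoeff_sq_ne_leadingCoeff_mul_sq hf hB A)
  · rw [natDegree_sub_eq_left_of_natDegree_lt h]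
    omega

end Polynomial

namespace RatFunc

theorem algebraMap_num_eq_algebraMap_denom_mul (x : RatFunc k) :
    algebraMap k[X] (RatFunc k) x.num = algebraMap k[X] (RatFunc k) x.denom * x := by
  rw [mul_comm]
  exact (div_eq_iff (algebraMap_ne_zero x.denom_ne_zero)).mp x.num_div_denom

variable [DecidableEq (RatFunc k)]

theorem inftyValuation_algebraMap {p : k[X]} (hp : p ≠ 0) :
    inftyValuation k (algebraMap k[X] (RatFunc k) p) = exp (p.natDegree : ℤ) :=
  inftyValuation.polynomial k hp

theorem le_intDegree_of_exp_le_inftyValuation {x : RatFunc k} {n : ℤ}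
    (h : exp n ≤ inftyValuation k x) : n ≤ x.intDegree := by
  have hx : x ≠ 0 := (Valuation.pos_iff _).mp (exp_pos.trans_le h)
  rwa [inftyValuation_apply, inftyValuation_of_nonzero _ hx, exp_le_exp] at h

theorem intDegree_le_of_inftyValuation_le_exp {x : RatFunc k} {n : ℤ} (hn : 0 ≤ n)
    (h : inftyValuation k x ≤ exp n) : x.intDegree ≤ n := by
  rcases eq_or_ne x 0 with rfl | hx
  · rwa [intDegree_zero]
  · rwa [inftyValuation_apply, inftyValuation_of_nonzero _ hx, exp_le_exp] at h

theorem exp_neg_one_le_inftyValuation_inv_X_sub (p : k[X]) :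
    exp (-1) ≤ inftyValuation k (X⁻¹ - algebraMap k[X] (RatFunc k) p) := by
  have hp : (1 - Polynomial.X * p : k[X]) ≠ 0 := fun h => by
    simpa using congrArg (Polynomial.eval 0) h
  have hsplit : X⁻¹ - algebraMap k[X] (RatFunc k) p
      = algebraMap k[X] (RatFunc k) (1 - Polynomial.X * p) * X⁻¹ := by
    rw [map_sub, map_one, map_mul, algebraMap_X, sub_mul, mul_comm X, mul_assoc,
      mul_inv_cancel₀ X_ne_zero, one_mul, mul_one]
  rw [hsplit, map_mul, map_inv₀, inftyValuation.X, ← exp_neg, inftyValuation_algebraMap hp]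
  exact le_mul_of_one_le_left' (by rw [← exp_zero, exp_le_exp]; positivity)

theorem inftyValuation_mul_sq_le_sq_sub_mul_sq {f : k[X]} (hf : ¬ IsSquare f.leadingCoeff)
    (a b : RatFunc k) :
    inftyValuation k (algebraMap k[X] (RatFunc k) f) * inftyValuation k b ^ 2 ≤
      inftyValuation k (a ^ 2 - algebraMap k[X] (RatFunc k) f * b ^ 2) := by
  set φ := algebraMap k[X] (RatFunc k)
  set v := inftyValuation k
  rcases eq_or_ne b 0 with rfl | hb
  · simp
  have hf0 := ne_zero_of_not_isSquare_leadingCoeff hf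
  -- clear denominators: `D a = A` and `D b = B` with `A`, `B`, `D` polynomials
  set D := a.denom * b.denom
  have hD : φ D ≠ 0 := algebraMap_ne_zero (mul_ne_zero a.denom_ne_zero b.denom_ne_zero)
  obtain ⟨A, hA⟩ : ∃ A : k[X], φ A = φ D * a :=
    ⟨a.num * b.denom, by rw [map_mul, algebraMap_num_eq_algebraMap_denom_mul, map_mul]; ring⟩
  obtain ⟨B, hB⟩ : ∃ B : k[X], φ B = φ D * b :=
    ⟨b.num * a.denom, by rw [map_mul, algebraMap_num_eq_algebraMap_denom_mul, map_mul]; ring⟩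
  have hB0 : B ≠ 0 := by
    rintro rfl
    exact mul_ne_zero hD hb (by rw [← hB, map_zero])
  have hpoly : v (φ f) * v (φ B) ^ 2 ≤ v (φ (A ^ 2 - f * B ^ 2)) := by
    rw [inftyValuation_algebraMap hf0, inftyValuation_algebraMap hB0,
      inftyValuation_algebraMap (sq_sub_mul_sq_ne_zero hf hB0 A), ← exp_nsmul, ← exp_add,
      exp_le_exp, nsmul_eq_mul]
    have := natDegree_add_two_mul_le_natDegree_sq_sub_mul_sq hf hB0 A
    omega
  clear_value D
  simp only [map_sub, map_mul, map_pow, hA, hB] at hpoly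
  rw [show (φ D * a) ^ 2 - φ f * (φ D * b) ^ 2 = φ D ^ 2 * (a ^ 2 - φ f * b ^ 2) by ring,
    map_mul, map_pow, mul_pow, mul_left_comm] at hpoly
  exact le_of_mul_le_mul_left hpoly (pow_pos ((Valuation.pos_iff v).mpr hD) 2)

theorem exists_inftyValuation_sub_algebraMap_le (a : RatFunc k) :
    ∃ p : k[X], inftyValuation k (a - algebraMap k[X] (RatFunc k) p) ≤ exp (-1) := by
  set φ := algebraMap k[X] (RatFunc k)
  refine ⟨a.num /ₘ a.denom, ?_⟩
  have hden : φ a.denom ≠ 0 := algebraMap_ne_zero a.denom_ne_zero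
  have hsplit : a - φ (a.num /ₘ a.denom) = φ (a.num %ₘ a.denom) / φ a.denom := by
    rw [eq_div_iff hden, modByMonic_eq_sub_mul_div a.num a.denom, map_sub, map_mul,
      algebraMap_num_eq_algebraMap_denom_mul]
    ring
  rcases eq_or_ne (a.num %ₘ a.denom) 0 with hr | hr
  · simp [hsplit, hr]
  rw [hsplit, map_div₀, inftyValuation_algebraMap hr, inftyValuation_algebraMap a.denom_ne_zero,
    ← exp_sub, exp_le_exp]
  have := natDegree_lt_natDegree hr (degree_modByMonic_lt a.num a.monic_denom)
  omega

theorem exp_natDegree_sub_two_le_inftyValuation_sq_sub_mul_sq {f : k[X]}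
    (hf : ¬ IsSquare f.leadingCoeff) (a : RatFunc k) {b : RatFunc k}
    (hb : exp (-1) ≤ inftyValuation k b) :
    exp (f.natDegree - 2 : ℤ) ≤
      inftyValuation k (a ^ 2 - algebraMap k[X] (RatFunc k) f * b ^ 2) :=
  calc exp (f.natDegree - 2 : ℤ) = exp (f.natDegree : ℤ) * exp (-1) ^ 2 := by
        rw [← exp_nsmul, ← exp_add, smul_neg, nsmul_one, Nat.cast_ofNat, sub_eq_add_neg]
    _ ≤ inftyValuation k (algebraMap k[X] (RatFunc k) f) * inftyValuation k b ^ 2 := by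
        rw [inftyValuation_algebraMap (ne_zero_of_not_isSquare_leadingCoeff hf)]
        gcongr
    _ ≤ _ := inftyValuation_mul_sq_le_sq_sub_mul_sq hf _ _

theorem inftyValuation_sq_sub_mul_sq_le_exp_natDegree_sub_two {f : k[X]} (hf : f ≠ 0)
    {a b : RatFunc k} (ha : inftyValuation k a ≤ exp (-1))
    (hb : inftyValuation k b ≤ exp (-1)) :
    inftyValuation k (a ^ 2 - algebraMap k[X] (RatFunc k) f * b ^ 2) ≤
      exp (f.natDegree - 2 : ℤ) := by
  have hexp : exp (-1 : ℤ) ^ 2 = exp (-2) := by rw [← exp_nsmul, smul_neg, nsmul_one]; rfl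
  refine (Valuation.map_sub _ _ _).trans (max_le ?_ ?_)
  · calc inftyValuation k (a ^ 2) ≤ exp (-1) ^ 2 := by rw [map_pow]; gcongr
      _ ≤ exp (f.natDegree - 2 : ℤ) := by rw [hexp, exp_le_exp]; omega
  · calc inftyValuation k (algebraMap k[X] (RatFunc k) f * b ^ 2)
        ≤ exp (f.natDegree : ℤ) * exp (-1) ^ 2 := by
          rw [map_mul, map_pow, inftyValuation_algebraMap hf]; gcongr
      _ = exp (f.natDegree - 2 : ℤ) := by rw [hexp, ← exp_add, sub_eq_add_neg]

end RatFunc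

end

theorem stmt5_general (k : Type) [Field k] (g : ℕ)
    (f : Polynomial k) (hf : f.natDegree = 2 * g + 2)
    (hlead : ¬ ∃ c : k, c ^ 2 = f.leadingCoeff)
    (K : Type) [Field K] [Algebra (RatFunc k) K]
    (Y : K)
    (hrep : ∀ z : K, ∃! ab : RatFunc k × RatFunc k,
        z = algebraMap (RatFunc k) K ab.1 + algebraMap (RatFunc k) K ab.2 * Y)
    (hnorm : ∀ a b : RatFunc k,
        Algebra.norm (RatFunc k)
            (algebraMap (RatFunc k) K a + algebraMap (RatFunc k) K b * Y)
          = a ^ 2 - (algebraMap (Polynomial k) (RatFunc k) f) * b ^ 2) :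
    -- the element x = Y / X realizes the lower bound 2g :
    (∀ c d : Polynomial k,
        Y / algebraMap (RatFunc k) K RatFunc.X
            - (algebraMap (RatFunc k) K (algebraMap (Polynomial k) (RatFunc k) c)
              + algebraMap (RatFunc k) K (algebraMap (Polynomial k) (RatFunc k) d) * Y) ≠ 0 ∧
        2 * (g : ℤ) ≤
          (Algebra.norm (RatFunc k)
            (Y / algebraMap (RatFunc k) K RatFunc.X
              - (algebraMap (RatFunc k) K (algebraMap (Polynomial k) (RatFunc k) c)
                + algebraMap (RatFunc k) K (algebraMap (Polynomial k) (RatFunc k) d) * Y))).intDegree) ∧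
    -- and the Euclidean minimum is at most 2g, so M(K) = 2g :
    (∀ x : K, ∃ c d : Polynomial k,
      x = algebraMap (RatFunc k) K (algebraMap (Polynomial k) (RatFunc k) c)
            + algebraMap (RatFunc k) K (algebraMap (Polynomial k) (RatFunc k) d) * Y ∨
      (Algebra.norm (RatFunc k)
          (x - (algebraMap (RatFunc k) K (algebraMap (Polynomial k) (RatFunc k) c)
            + algebraMap (RatFunc k) K (algebraMap (Polynomial k) (RatFunc k) d) * Y))).intDegree
        ≤ 2 * (g : ℤ)) := by
  classical
  set φ := algebraMap k[X] (RatFunc k)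
  set ψ := algebraMap (RatFunc k) K
  have hsq : ¬ IsSquare f.leadingCoeff := fun ⟨c, hc⟩ => hlead ⟨c, by rw [hc, sq]⟩
  have hdeg : (f.natDegree - 2 : ℤ) = 2 * g := by rw [hf]; push_cast; ring
  refine ⟨fun c d => ?_, fun x => ?_⟩
  · have hx : Y / ψ RatFunc.X - (ψ (φ c) + ψ (φ d) * Y)
        = ψ (-φ c) + ψ (RatFunc.X⁻¹ - φ d) * Y := by
      simp only [map_neg, map_sub, map_inv₀]
      ring
    have hN := RatFunc.exp_natDegree_sub_two_le_inftyValuation_sq_sub_mul_sq hsq (-φ c)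
      (RatFunc.exp_neg_one_le_inftyValuation_inv_X_sub d)
    have hnorm0 : Algebra.norm (RatFunc k) (0 : K) = 0 := by simpa using hnorm 0 0
    rw [hx, hnorm, ← hdeg]
    refine ⟨fun h0 => ?_, RatFunc.le_intDegree_of_exp_le_inftyValuation hN⟩
    rw [← hnorm, h0, hnorm0, map_zero] at hN
    exact exp_ne_zero (le_zero_iff.mp hN)
  · obtain ⟨⟨a, b⟩, hab, -⟩ := hrep x
    obtain ⟨p, hp⟩ := RatFunc.exists_inftyValuation_sub_algebraMap_le a
    obtain ⟨q, hq⟩ := RatFunc.exists_inftyValuation_sub_algebraMap_le b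
    refine ⟨p, q, Or.inr ?_⟩
    have hx : x - (ψ (φ p) + ψ (φ q) * Y) = ψ (a - φ p) + ψ (b - φ q) * Y := by
      rw [hab, map_sub, map_sub]
      ring
    rw [hx, hnorm, ← hdeg]
    exact RatFunc.intDegree_le_of_inftyValuation_le_exp (by omega)
      (RatFunc.inftyValuation_sq_sub_mul_sq_le_exp_natDegree_sub_two
        (ne_zero_of_not_isSquare_leadingCoeff hsq) hp hq)

/-- In `K = k(X)(√f)` with `deg f = 2g+2` and non-square leading coefficient, the element
`x = Y/X` satisfies `deg N(x - y) ≥ 2g` for every `y = c + dY` with `c, d ∈ k[X]`;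
together with the upper bound this shows that the Euclidean minimum `M(K)` equals `2g`. -/
theorem stmt5 (k : Type) [Field k] (hchar : ringChar k ≠ 2) (g : ℕ) (hg : 1 ≤ g)
    (f : Polynomial k) (hf : f.natDegree = 2 * g + 2)
    (hlead : ¬ ∃ c : k, c ^ 2 = f.leadingCoeff)
    (K : Type) [Field K] [Algebra (RatFunc k) K]
    (Y : K)
    (hY : Y ^ 2 = algebraMap (RatFunc k) K (algebraMap (Polynomial k) (RatFunc k) f))
    (hrep : ∀ z : K, ∃! ab : RatFunc k × RatFunc k,
        z = algebraMap (RatFunc k) K ab.1 + algebraMap (RatFunc k) K ab.2 * Y)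
    (hnorm : ∀ a b : RatFunc k,
        Algebra.norm (RatFunc k)
            (algebraMap (RatFunc k) K a + algebraMap (RatFunc k) K b * Y)
          = a ^ 2 - (algebraMap (Polynomial k) (RatFunc k) f) * b ^ 2) :
    -- the element x = Y / X realizes the lower bound 2g :
    (∀ c d : Polynomial k,
        Y / algebraMap (RatFunc k) K RatFunc.X
            - (algebraMap (RatFunc k) K (algebraMap (Polynomial k) (RatFunc k) c)
              + algebraMap (RatFunc k) K (algebraMap (Polynomial k) (RatFunc k) d) * Y) ≠ 0 ∧
        2 * (g : ℤ) ≤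
          (Algebra.norm (RatFunc k)
            (Y / algebraMap (RatFunc k) K RatFunc.X
              - (algebraMap (RatFunc k) K (algebraMap (Polynomial k) (RatFunc k) c)
                + algebraMap (RatFunc k) K (algebraMap (Polynomial k) (RatFunc k) d) * Y))).intDegree) ∧
    -- and the Euclidean minimum is at most 2g, so M(K) = 2g :
    (∀ x : K, ∃ c d : Polynomial k,
      x = algebraMap (RatFunc k) K (algebraMap (Polynomial k) (RatFunc k) c)
            + algebraMap (RatFunc k) K (algebraMap (Polynomial k) (RatFunc k) d) * Y ∨
      (Algebra.norm (RatFunc k)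
          (x - (algebraMap (RatFunc k) K (algebraMap (Polynomial k) (RatFunc k) c)
            + algebraMap (RatFunc k) K (algebraMap (Polynomial k) (RatFunc k) d) * Y))).intDegree
        ≤ 2 * (g : ℤ)) :=
  stmt5_general k g f hf hlead K Y hrep hnorm
end

section
/- Let C be a smooth projective curve of genus g over an algebraically closed field k, S ⊂ C finite and nonempty, K = k(C), O_S the ring of rational functions regular outside S, and deg_S(x) = -Σ_{P∈S} v_P(x). Then for every x ∈ K there exists y ∈ O_S with deg_S(x - y) ≤ μ(S), where μ(S) is the index of speciality of S. In particular the Euclidean minimum M_S(K) = max_x min_y deg_S(x - y) satisfies M_S(K) ≤ μ(S) ≤ 2g - 1. -/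
open scoped Classical

/-- An abstract model of a smooth projective (geometrically irreducible) curve over `k`:
`K` is its function field, `Point` its set of closed points, `v P` the normalized discrete
valuation at `P`, `Ω` the one-dimensional `K`-vector space of rational differential forms
with order function `ordω` and differential `d`, `genus` the genus, `Kcan` the divisor of a
fixed nonzero differential (a canonical divisor), and `ℓ D` the dimension of the
Riemann-Roch space `L(D)`.  The axioms record the standard facts: valuations are
multiplicative and satisfy the ultrametric inequality, a nonzero function has a degree-zero
divisor of finite support, constants have no zeros or poles, `ordω` shifts by `v` under
`K`-scaling, `deg Kcan = 2g - 2`, the Riemann-Roch theorem, the characterization of `ℓ` as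
the dimension of `L(D)`, and Serre duality identifying `ℓ(Kcan - D)` with
`dim Ω(-D)` (so `ℓ (Kcan - D) = 0` iff there is no nonzero differential `ω` with
`div ω ≥ D`). -/
structure AlgCurve (k : Type) [Field k] where
  K : Type
  [fieldK : Field K]
  [algK : Algebra k K]
  Point : Type
  v : Point → K → ℤ
  Ω : Type
  [acgΩ : AddCommGroup Ω]
  [modΩ : Module K Ω]
  ordω : Point → Ω → ℤ
  d : K → Ω
  genus : ℕ
  Kcan : Point →₀ ℤ
  ℓ : (Point →₀ ℤ) → ℕ
  v_mul : ∀ P (x y : K), x ≠ 0 → y ≠ 0 → v P (x * y) = v P x + v P y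
  v_add : ∀ P (x y : K), x ≠ 0 → y ≠ 0 → x + y ≠ 0 → min (v P x) (v P y) ≤ v P (x + y)
  v_finite : ∀ x : K, x ≠ 0 → (Function.support fun P => v P x).Finite
  v_sum_zero : ∀ x : K, x ≠ 0 → ∑ᶠ P, v P x = 0
  v_const : ∀ c : k, c ≠ 0 → ∀ P, v P (algebraMap k K c) = 0
  v_uniformizer : ∀ P, ∃ x : K, x ≠ 0 ∧ v P x = 1
  ordω_smul : ∀ P (x : K) (ω : Ω), x ≠ 0 → ω ≠ 0 → ordω P (x • ω) = v P x + ordω P ω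
  exists_canform : ∃ ω : Ω, ω ≠ 0 ∧ ∀ P, ordω P ω = Kcan P
  d_add : ∀ x y : K, d (x + y) = d x + d y
  d_mul : ∀ x y : K, d (x * y) = x • d y + y • d x
  d_const : ∀ c : k, d (algebraMap k K c) = 0
  deg_Kcan : (Kcan.sum fun _ n => n) = 2 * (genus : ℤ) - 2
  riemannRoch : ∀ D : Point →₀ ℤ,
    (ℓ D : ℤ) - (ℓ (Kcan - D) : ℤ) = (D.sum fun _ n => n) + 1 - genus
  ℓ_spec : ∀ D : Point →₀ ℤ, ∀ n : ℕ, n ≤ ℓ D ↔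
    ∃ s : Finset K, s.card = n ∧ LinearIndependent k (fun x : s => (x : K)) ∧
      ∀ x ∈ s, x ≠ 0 ∧ ∀ P, 0 ≤ v P x + D P
  serre : ∀ D : Point →₀ ℤ,
    ℓ (Kcan - D) = 0 ↔ ¬ ∃ ω : Ω, ω ≠ 0 ∧ ∀ P, D P ≤ ordω P ω

attribute [instance] AlgCurve.fieldK AlgCurve.algK AlgCurve.acgΩ AlgCurve.modΩ

namespace AlgCurve

variable {k : Type} [Field k]

/-- The degree of a divisor. -/
def deg {C : AlgCurve k} (D : C.Point →₀ ℤ) : ℤ := D.sum fun _ n => n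

/-- `Ω(-D) = 0`: there is no nonzero differential form `ω` with `div ω ≥ D`. -/
def OmegaZero (C : AlgCurve k) (D : C.Point →₀ ℤ) : Prop :=
  ¬ ∃ ω : C.Ω, ω ≠ 0 ∧ ∀ P, D P ≤ C.ordω P ω

/-- The index of speciality `μ(S)` of a finite set `S` of points: the minimal degree of a
divisor supported on `S` with `Ω(-D) = 0`. -/
noncomputable def μ (C : AlgCurve k) (S : Set C.Point) : ℤ :=
  sInf {n : ℤ | ∃ D : C.Point →₀ ℤ, ↑D.support ⊆ S ∧ C.OmegaZero D ∧ deg D = n}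

/-- Membership in the ring `O_S` of rational functions regular outside `S`. -/
def MemOS (C : AlgCurve k) (S : Set C.Point) (x : C.K) : Prop :=
  x ≠ 0 → ∀ P, P ∉ S → 0 ≤ C.v P x

/-- `deg_S x = -∑_{P ∈ S} v_P(x)` (meaningful for `x ≠ 0`). -/
noncomputable def degS (C : AlgCurve k) (S : Set C.Point) (x : C.K) : ℤ :=
  -∑ᶠ P ∈ S, C.v P x

/-- `n` is a Weierstrass gap of `P`: `ℓ(nP) = ℓ((n-1)P)`. -/
def IsGap (C : AlgCurve k) (P : C.Point) (n : ℤ) : Prop :=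
  C.ℓ (Finsupp.single P n) = C.ℓ (Finsupp.single P (n - 1))

end AlgCurve

/-!
Choose `D` supported on `S` with `Ω(-D) = 0` and `deg D = μ(S)`. Given `x`, enlarge `D` by the
poles of `x` in `S` to get `A`, and by the poles of `x` off `S` to get `B`. Then `x ∈ L(A ⊔ B)`,
and `A ⊓ B ≥ D` is nonspecial, so by Riemann-Roch `L(A) + L(B) = L(A ⊔ B)`. Writing `x = y + z`
with `y ∈ L(A) ⊆ O_S` and `z ∈ L(B)`, the poles of `z` in `S` are bounded by `D`, whence
`deg_S z ≤ deg D = μ(S)`. Finally a divisor of degree `2g - 1` at one point of `S` is nonspecial.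
-/

namespace AlgCurve

variable {k : Type} [Field k] (C : AlgCurve k)

/-- The Riemann-Roch space `L(D)`. -/
def L (D : C.Point →₀ ℤ) : Submodule k C.K where
  carrier := {x | x ≠ 0 → ∀ P, 0 ≤ C.v P x + D P}
  zero_mem' := fun h => absurd rfl h
  add_mem' := by
    intro a b ha hb hab P
    rcases eq_or_ne a 0 with rfl | ha0
    · rw [zero_add] at hab ⊢; exact hb hab P
    rcases eq_or_ne b 0 with rfl | hb0
    · rw [add_zero] at hab ⊢; exact ha hab P
    have := le_min (ha ha0 P) (hb hb0 P)
    have := C.v_add P a b ha0 hb0 hab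
    omega
  smul_mem' := by
    intro c x hx hcx P
    have hc : c ≠ 0 := by rintro rfl; exact hcx (zero_smul k x)
    have hx0 : x ≠ 0 := by rintro rfl; exact hcx (smul_zero c)
    rw [Algebra.smul_def, C.v_mul P _ x ((map_ne_zero _).mpr hc) hx0, C.v_const c hc P, zero_add]
    exact hx hx0 P

variable {C}

lemma mem_L {D : C.Point →₀ ℤ} {x : C.K} : x ∈ C.L D ↔ (x ≠ 0 → ∀ P, 0 ≤ C.v P x + D P) :=
  Iff.rfl

lemma L_mono {D D' : C.Point →₀ ℤ} (h : D ≤ D') : C.L D ≤ C.L D' :=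
  fun _ hx hx0 P => (hx hx0 P).trans (add_le_add_right (Finsupp.le_def.mp h P) _)

lemma L_inf (A B : C.Point →₀ ℤ) : C.L (A ⊓ B) = C.L A ⊓ C.L B := by
  ext x
  simp only [Submodule.mem_inf, mem_L, Finsupp.inf_apply]
  constructor
  · intro h
    exact ⟨fun hx P => (h hx P).trans (add_le_add_right (min_le_left _ _) _),
      fun hx P => (h hx P).trans (add_le_add_right (min_le_right _ _) _)⟩
  · rintro ⟨hA, hB⟩ hx P
    rcases min_choice (A P) (B P) with h | h <;> rw [h]
    exacts [hA hx P, hB hx P]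

lemma le_ℓ_iff {D : C.Point →₀ ℤ} {n : ℕ} :
    n ≤ C.ℓ D ↔ ∃ s : Finset C.K, s.card = n ∧ LinearIndepOn k id (s : Set C.K) ∧
      (s : Set C.K) ⊆ C.L D := by
  rw [C.ℓ_spec]
  refine exists_congr fun s => and_congr_right fun _ => and_congr_right fun hs => ?_
  have hs0 : ∀ x ∈ s, x ≠ 0 := fun x hx => hs.ne_zero ⟨x, hx⟩
  exact ⟨fun h x hx _ => (h x hx).2, fun h x hx => ⟨hs0 x hx, h hx (hs0 x hx)⟩⟩

lemma rank_L_le (D : C.Point →₀ ℤ) : Module.rank k (C.L D) ≤ C.ℓ D := by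
  refine rank_le fun s hs => le_ℓ_iff.mpr
    ⟨s.map (Function.Embedding.subtype _), Finset.card_map _, ?_, ?_⟩ <;> rw [Finset.coe_map]
  · exact LinearIndepOn.image (f := (C.L D).subtype) hs (by simp)
  · exact Set.image_subset_iff.mpr fun y _ => y.2

instance (D : C.Point →₀ ℤ) : FiniteDimensional k (C.L D) :=
  Module.rank_lt_aleph0_iff.mp ((rank_L_le D).trans_lt Cardinal.natCast_lt_aleph0)

lemma ℓ_eq_finrank (D : C.Point →₀ ℤ) : C.ℓ D = Module.finrank k (C.L D) := by
  refine le_antisymm ?_ (Module.finrank_le_of_rank_le (rank_L_le D))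
  obtain ⟨s, hcard, hs, hsL⟩ := le_ℓ_iff.mp (le_refl (C.ℓ D))
  calc C.ℓ D = Module.finrank k (Submodule.span k (s : Set C.K)) := by
        rw [finrank_span_finset_eq_card hs, hcard]
    _ ≤ Module.finrank k (C.L D) := Submodule.finrank_mono (Submodule.span_le.mpr hsL)

lemma deg_add (A B : C.Point →₀ ℤ) : deg (A + B) = deg A + deg B :=
  Finsupp.sum_add_index' (fun _ => rfl) (fun _ _ _ => rfl)

lemma deg_sub (A B : C.Point →₀ ℤ) : deg (A - B) = deg A - deg B :=
  Finsupp.sum_sub_index (fun _ _ _ => rfl)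

lemma deg_single (P : C.Point) (n : ℤ) : deg (Finsupp.single P n) = n :=
  Finsupp.sum_single_index rfl

lemma deg_eq_finsum (D : C.Point →₀ ℤ) : deg D = ∑ᶠ P, D P :=
  (finsum_eq_sum_of_support_subset D fun _ hP => Finsupp.mem_support_iff.mpr hP).symm

lemma deg_nonneg_of_mem_L {D : C.Point →₀ ℤ} {x : C.K} (hx0 : x ≠ 0) (hx : x ∈ C.L D) :
    0 ≤ deg D := by
  have hsum := finsum_add_distrib (C.v_finite x hx0) D.hasFiniteSupport
  rw [C.v_sum_zero x hx0, zero_add, ← deg_eq_finsum] at hsum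
  exact hsum ▸ finsum_nonneg (hx hx0)

lemma ℓ_eq_zero_of_deg_neg {D : C.Point →₀ ℤ} (h : deg D < 0) : C.ℓ D = 0 := by
  rw [ℓ_eq_finrank, Submodule.finrank_eq_zero, Submodule.eq_bot_iff]
  exact fun x hx => by_contra fun hx0 => h.not_ge (deg_nonneg_of_mem_L hx0 hx)

lemma OmegaZero.mono {D D' : C.Point →₀ ℤ} (hD : C.OmegaZero D) (h : D ≤ D') :
    C.OmegaZero D' :=
  fun ⟨ω, hω, hord⟩ => hD ⟨ω, hω, fun P => (Finsupp.le_def.mp h P).trans (hord P)⟩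

lemma ℓ_of_omegaZero {D : C.Point →₀ ℤ} (hD : C.OmegaZero D) :
    (C.ℓ D : ℤ) = deg D + 1 - C.genus := by
  have hrr := C.riemannRoch D
  rwa [(C.serre D).mpr hD, Nat.cast_zero, sub_zero] at hrr

lemma omegaZero_of_deg_gt {D : C.Point →₀ ℤ} (h : 2 * (C.genus : ℤ) - 2 < deg D) :
    C.OmegaZero D := by
  refine (C.serre D).mp (ℓ_eq_zero_of_deg_neg ?_)
  have hK : deg C.Kcan = 2 * (C.genus : ℤ) - 2 := C.deg_Kcan
  rw [deg_sub]
  omega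

lemma genus_sub_one_le_deg {D : C.Point →₀ ℤ} (hD : C.OmegaZero D) :
    (C.genus : ℤ) - 1 ≤ deg D := by
  have := ℓ_of_omegaZero hD
  omega

/-- Riemann-Roch makes `ℓ` affine in the degree on nonspecial divisors, and
`deg (A ⊓ B) + deg (A ⊔ B) = deg A + deg B`, so `L A ⊔ L B` has the dimension of `L (A ⊔ B)`. -/
lemma L_sup_L {A B : C.Point →₀ ℤ} (h : C.OmegaZero (A ⊓ B)) :
    C.L A ⊔ C.L B = C.L (A ⊔ B) := by
  refine Submodule.eq_of_le_of_finrank_eq (sup_le (L_mono le_sup_left) (L_mono le_sup_right)) ?_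
  have hdim := Submodule.finrank_sup_add_finrank_inf_eq (C.L A) (C.L B)
  rw [← L_inf, ← ℓ_eq_finrank, ← ℓ_eq_finrank, ← ℓ_eq_finrank] at hdim
  have hdeg : deg (A ⊓ B) + deg (A ⊔ B) = deg A + deg B := by
    rw [← deg_add, ← deg_add, inf_add_sup]
  have := ℓ_of_omegaZero h
  have := ℓ_of_omegaZero (h.mono inf_le_left)
  have := ℓ_of_omegaZero (h.mono inf_le_right)
  have := ℓ_of_omegaZero (D := A ⊔ B) (h.mono (inf_le_left.trans le_sup_left))
  rw [← ℓ_eq_finrank]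
  omega

lemma exists_mem_L (x : C.K) : ∃ E, x ∈ C.L E := by
  rcases eq_or_ne x 0 with rfl | hx0
  · exact ⟨0, zero_mem _⟩
  · refine ⟨-Finsupp.ofSupportFinite (fun P => C.v P x) (C.v_finite x hx0), fun _ P => ?_⟩
    simp [Finsupp.ofSupportFinite_coe]

lemma exists_memOS_sub_mem_L {S : Set C.Point} {D : C.Point →₀ ℤ} (hDS : ↑D.support ⊆ S)
    (hD : C.OmegaZero D) (x : C.K) :
    ∃ y, C.MemOS S y ∧ (x - y ≠ 0 → ∀ P ∈ S, 0 ≤ C.v P (x - y) + D P) := by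
  obtain ⟨E, hxE⟩ := exists_mem_L x
  have hD0 : ∀ P ∉ S, D P = 0 := fun P hP => Finsupp.notMem_support_iff.mp fun h => hP (hDS h)
  set A := D ⊔ E.filter (· ∈ S)
  set B := D + (E.filter (· ∉ S))⁺
  have hA : ∀ P ∉ S, A P = 0 := by
    intro P hP
    simp [A, Finsupp.sup_apply, hP, hD0 P hP]
  have hB : ∀ P ∈ S, B P = D P := by
    intro P hP
    simp [B, posPart_def, Finsupp.sup_apply, hP]
  have hEAB : E ≤ A ⊔ B := Finsupp.le_def.mpr fun P => by
    by_cases hP : P ∈ S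
    · simp [A, Finsupp.sup_apply, hP]
    · simp [B, posPart_def, Finsupp.sup_apply, hP, hD0 P hP]
  have hDB : D ≤ B := le_add_of_nonneg_right (posPart_nonneg _)
  have hsup := L_sup_L (A := A) (B := B) (hD.mono (le_inf le_sup_left hDB))
  obtain ⟨y, hy, z, hz, rfl⟩ := Submodule.mem_sup.mp (hsup ▸ L_mono hEAB hxE)
  refine ⟨y, fun hy0 P hP => ?_, fun hz0 P hP => ?_⟩
  · simpa [hA P hP] using hy hy0 P
  · rw [add_sub_cancel_left] at hz0 ⊢
    simpa [hB P hP] using hz hz0 P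

lemma degS_le_deg {S : Set C.Point} (hS : S.Finite) {D : C.Point →₀ ℤ} (hDS : ↑D.support ⊆ S)
    {z : C.K} (hz : ∀ P ∈ S, 0 ≤ C.v P z + D P) : C.degS S z ≤ deg D := by
  have hdeg : deg D = ∑ P ∈ hS.toFinset, D P :=
    Finsupp.sum_of_support_subset D (fun P hP => hS.mem_toFinset.mpr (hDS hP)) _ fun _ _ => rfl
  have hsum := Finset.sum_nonneg fun P hP => hz P (hS.mem_toFinset.mp hP)
  rw [Finset.sum_add_distrib, ← hdeg] at hsum
  rw [degS, finsum_mem_eq_finite_toFinset_sum _ hS]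
  omega

lemma exists_omegaZero_deg_eq {S : Set C.Point} (hS : S.Nonempty) :
    ∃ D : C.Point →₀ ℤ, ↑D.support ⊆ S ∧ C.OmegaZero D ∧ deg D = 2 * (C.genus : ℤ) - 1 := by
  obtain ⟨P, hP⟩ := hS
  refine ⟨Finsupp.single P (2 * C.genus - 1), fun Q hQ => ?_, omegaZero_of_deg_gt ?_,
    deg_single P _⟩
  · rwa [Finset.mem_singleton.mp (Finsupp.support_single_subset hQ)]
  · rw [deg_single]
    omega

lemma bddBelow_deg_omegaZero (S : Set C.Point) :
    BddBelow {n : ℤ | ∃ D : C.Point →₀ ℤ, ↑D.support ⊆ S ∧ C.OmegaZero D ∧ deg D = n} :=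
  ⟨C.genus - 1, by rintro _ ⟨D, -, hD, rfl⟩; exact genus_sub_one_le_deg hD⟩

lemma μ_le {S : Set C.Point} (hS : S.Nonempty) : C.μ S ≤ 2 * (C.genus : ℤ) - 1 :=
  csInf_le (bddBelow_deg_omegaZero S) (exists_omegaZero_deg_eq hS)

lemma exists_deg_eq_μ {S : Set C.Point} (hS : S.Nonempty) :
    ∃ D : C.Point →₀ ℤ, ↑D.support ⊆ S ∧ C.OmegaZero D ∧ deg D = C.μ S :=
  Int.csInf_mem ⟨_, exists_omegaZero_deg_eq hS⟩ (bddBelow_deg_omegaZero S)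

end AlgCurve

theorem stmt10_general (k : Type) [Field k] (C : AlgCurve k)
    (S : Set C.Point) (hfin : S.Finite) (hne : S.Nonempty) :
    (∀ x : C.K, ∃ y : C.K, C.MemOS S y ∧ (x = y ∨ C.degS S (x - y) ≤ C.μ S)) ∧
    C.μ S ≤ 2 * (C.genus : ℤ) - 1 := by
  obtain ⟨D, hDS, hD, hdeg⟩ := AlgCurve.exists_deg_eq_μ hne
  refine ⟨fun x => ?_, AlgCurve.μ_le hne⟩
  obtain ⟨y, hy, hxy⟩ := AlgCurve.exists_memOS_sub_mem_L hDS hD x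
  refine ⟨y, hy, ?_⟩
  rcases eq_or_ne (x - y) 0 with h | h
  · exact Or.inl (sub_eq_zero.mp h)
  · exact Or.inr (hdeg ▸ AlgCurve.degS_le_deg hfin hDS (hxy h))

/-- Every `x ∈ K` is within `deg_S`-distance `μ(S)` of the ring `O_S`; in particular the
Euclidean minimum `M_S(K)` satisfies `M_S(K) ≤ μ(S) ≤ 2g - 1`. -/
theorem stmt10 (k : Type) [Field k] [IsAlgClosed k] (C : AlgCurve k)
    (S : Set C.Point) (hfin : S.Finite) (hne : S.Nonempty) :
    (∀ x : C.K, ∃ y : C.K, C.MemOS S y ∧ (x = y ∨ C.degS S (x - y) ≤ C.μ S)) ∧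
    C.μ S ≤ 2 * (C.genus : ℤ) - 1 :=
  stmt10_general k C S hfin hne
end
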